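/- Let G₁, …, G_p (p ≥ 2) be nonempty connected interval graphs and let G = G₁ ⊔ ⋯ ⊔ G_p be their disjoint union. Then ν(G_γ) = max{ν(G₁), …, ν(G_p)} + 1. -/

import Mathlib

/-!
Upper bound: squeeze optimal representations of the components into the disjoint windows
`(i, i + 1) ⊆ [0, p]`, and take `I(u) = [-1, p]`, `I(v) = [0, p + 1]` with the pendant paths
`a₁ a₂` to the left and `b₁ b₂` to the right. None of the six new intervals lies strictly inside
another interval, and intervals of distinct components are disjoint, so a chain consists of a chain
of one component topped by at most one new interval.

Lower bound: in any representation, pick `α ∈ I(a₁) ∩ I(u)` and `β ∈ I(b₁) ∩ I(v)`; then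
`α ∉ I(v)` and `β ∉ I(u)`. An old interval meets `I(u)` and `I(v)` but avoids `α` and `β`, so it
lies strictly inside `I(u)` or `I(v)`, or else it covers `I(u) ∩ I(v)`. In the last case it meets,
by the Helly property of intervals, every interval of another component, which is impossible since
`p ≥ 2`. Hence a longest chain of the component with the largest `ν` extends by `I(u)` or `I(v)`.
-/

open Set

/-- An interval representation of a simple graph `G`: each vertex `v` gets a nonempty
closed interval `[l v, r v] ⊆ ℝ`, and two distinct vertices are adjacent iff their
intervals intersect. -/
structure IntervalRep {V : Type*} (G : SimpleGraph V) where
  l : V → ℝ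
  r : V → ℝ
  le : ∀ v, l v ≤ r v
  adj_iff : ∀ u v : V, u ≠ v →
    (G.Adj u v ↔ (Icc (l u) (r u) ∩ Icc (l v) (r v)).Nonempty)

namespace IntervalRep

variable {V : Type*} {G : SimpleGraph V}

/-- The interval of a vertex. -/
def itv (R : IntervalRep G) (v : V) : Set ℝ := Icc (R.l v) (R.r v)

/-- The nesting `ν(R)`: the maximum length of a chain of strictly nested vertex intervals. -/
noncomputable def nesting (R : IntervalRep G) : ℕ :=
  sSup {k : ℕ | ∃ f : Fin k → V, ∀ i j : Fin k, i < j → R.itv (f i) ⊂ R.itv (f j)}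

/-- `ν_R(x)`: the maximum length of a chain of strictly nested vertex intervals whose
outermost interval is `I(x)` (counting `x` itself). -/
noncomputable def nuAt (R : IntervalRep G) (x : V) : ℕ :=
  sSup {k : ℕ | ∃ f : Fin k → V,
    (∀ i j : Fin k, i < j → R.itv (f i) ⊂ R.itv (f j)) ∧
    ∃ h : 0 < k, f ⟨k - 1, by omega⟩ = x}

end IntervalRep

/-- A graph is an interval graph if it admits an interval representation. -/
def IsIntervalGraph {V : Type*} (G : SimpleGraph V) : Prop := Nonempty (IntervalRep G)

/-- The nesting number `ν(G)`: the minimum nesting over all interval representations. -/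
noncomputable def nu {V : Type*} (G : SimpleGraph V) : ℕ :=
  sInf {n : ℕ | ∃ R : IntervalRep G, R.nesting = n}

/-- `G_α`: add vertices `u, a₁, a₂, b₁, b₂` (coded as `0,1,2,3,4`), with `u` adjacent to all
of `G` and to `a₁, b₁`; `a₁ ~ a₂` and `b₁ ~ b₂`. -/
def Galpha {V : Type*} (G : SimpleGraph V) : SimpleGraph (V ⊕ Fin 5) :=
  SimpleGraph.fromRel fun x y =>
    match x, y with
    | Sum.inl a, Sum.inl b => G.Adj a b
    | Sum.inl _, Sum.inr i => i = 0
    | Sum.inr _, Sum.inl _ => False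
    | Sum.inr i, Sum.inr j =>
        i = 0 ∧ j = 1 ∨ i = 1 ∧ j = 2 ∨ i = 0 ∧ j = 3 ∨ i = 3 ∧ j = 4

/-- `G_β`: add vertices `u, a₁, a₂` (coded as `0,1,2`), with `u` adjacent to all of `G`
and to `a₁`; `a₁ ~ a₂`. -/
def Gbeta {V : Type*} (G : SimpleGraph V) : SimpleGraph (V ⊕ Fin 3) :=
  SimpleGraph.fromRel fun x y =>
    match x, y with
    | Sum.inl a, Sum.inl b => G.Adj a b
    | Sum.inl _, Sum.inr i => i = 0
    | Sum.inr _, Sum.inl _ => False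
    | Sum.inr i, Sum.inr j => i = 0 ∧ j = 1 ∨ i = 1 ∧ j = 2

/-- `G_γ`: add vertices `u, v, a₁, a₂, b₁, b₂` (coded as `0,1,2,3,4,5`), with `u ~ v`, both
adjacent to all of `G`; `u ~ a₁`, `a₁ ~ a₂`, `v ~ b₁`, `b₁ ~ b₂`. -/
def Ggamma {V : Type*} (G : SimpleGraph V) : SimpleGraph (V ⊕ Fin 6) :=
  SimpleGraph.fromRel fun x y =>
    match x, y with
    | Sum.inl a, Sum.inl b => G.Adj a b
    | Sum.inl _, Sum.inr i => i = 0 ∨ i = 1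
    | Sum.inr _, Sum.inl _ => False
    | Sum.inr i, Sum.inr j =>
        i = 0 ∧ j = 1 ∨ i = 0 ∧ j = 2 ∨ i = 2 ∧ j = 3 ∨ i = 1 ∧ j = 4 ∨ i = 4 ∧ j = 5

/-- The disjoint union of a family of graphs, on the sigma type of their vertex sets. -/
def sigmaGraph {p : ℕ} {V : Fin p → Type*} (G : ∀ i, SimpleGraph (V i)) :
    SimpleGraph (Σ i, V i) :=
  SimpleGraph.fromRel fun x y => ∃ h : x.1 = y.1, (G y.1).Adj (h ▸ x.2) y.2

/-- The graph obtained from `H` by adding one new vertex adjacent to every vertex of `H`. -/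
def joinVertex {W : Type*} (H : SimpleGraph W) : SimpleGraph (W ⊕ Unit) :=
  SimpleGraph.fromRel fun x y =>
    match x, y with
    | Sum.inl a, Sum.inl b => H.Adj a b
    | Sum.inl _, Sum.inr _ => True
    | _, _ => False

lemma Fin.strictMono_snoc {α : Type*} [Preorder α] {n : ℕ} {f : Fin n → α} (hf : StrictMono f)
    {x : α} (hx : ∀ i, f i < x) : StrictMono (Fin.snoc (α := fun _ => α) f x) := by
  intro a b hab
  obtain ⟨b, rfl⟩ | rfl := b.eq_castSucc_or_eq_last
  · obtain ⟨a, rfl⟩ | rfl := a.eq_castSucc_or_eq_last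
    · simpa using hf (Fin.castSucc_lt_castSucc_iff.1 hab)
    · exact absurd hab (Fin.le_last _).not_gt
  · obtain ⟨a, rfl⟩ | rfl := a.eq_castSucc_or_eq_last
    · simpa using hx a
    · exact absurd hab (lt_irrefl _)

lemma Set.Icc_inter_Icc_nonempty_iff {α : Type*} [LinearOrder α] {a b c d : α} (hab : a ≤ b)
    (hcd : c ≤ d) : (Icc a b ∩ Icc c d).Nonempty ↔ a ≤ d ∧ c ≤ b := by
  rw [Icc_inter_Icc, nonempty_Icc, sup_le_iff, le_inf_iff, le_inf_iff]
  tauto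

lemma Set.Icc_inter_Icc_inter_Icc_nonempty {α : Type*} [LinearOrder α] {a₁ b₁ a₂ b₂ a₃ b₃ : α}
    (h₁₂ : (Icc a₁ b₁ ∩ Icc a₂ b₂).Nonempty) (h₁₃ : (Icc a₁ b₁ ∩ Icc a₃ b₃).Nonempty)
    (h₂₃ : (Icc a₂ b₂ ∩ Icc a₃ b₃).Nonempty) : (Icc a₁ b₁ ∩ (Icc a₂ b₂ ∩ Icc a₃ b₃)).Nonempty := by
  simp only [Icc_inter_Icc, nonempty_Icc, sup_le_iff, le_inf_iff] at *
  tauto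

lemma Set.Icc_ssubset_or_ssubset_or_inter_subset {lu ru lv rv lz rz α β : ℝ}
    (hα : α ∈ Icc lu ru \ Icc lv rv) (hβ : β ∈ Icc lv rv \ Icc lu ru) (hzα : α ∉ Icc lz rz)
    (hzβ : β ∉ Icc lz rz) (hzu : (Icc lz rz ∩ Icc lu ru).Nonempty)
    (hzv : (Icc lz rz ∩ Icc lv rv).Nonempty) :
    Icc lz rz ⊂ Icc lu ru ∨ Icc lz rz ⊂ Icc lv rv ∨ Icc lu ru ∩ Icc lv rv ⊆ Icc lz rz := by
  have hz : lz ≤ rz := nonempty_Icc.1 hzu.left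
  rw [Icc_inter_Icc_nonempty_iff hz (nonempty_Icc.1 hzu.right)] at hzu
  rw [Icc_inter_Icc_nonempty_iff hz (nonempty_Icc.1 hzv.right)] at hzv
  simp only [mem_sdiff, mem_Icc, not_and_or, not_le] at hα hβ hzα hzβ
  -- `[lz, rz]` meets both intervals but avoids `α` and `β`, so it lies strictly between them
  have key : lu < lz ∧ rz < rv ∨ lv < lz ∧ rz < ru := by
    obtain ⟨⟨hα₁, hα₂⟩, hα₃ | hα₃⟩ := hα <;> obtain ⟨⟨hβ₁, hβ₂⟩, hβ₃ | hβ₃⟩ := hβ <;>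
      rcases hzα with hzα | hzα <;> rcases hzβ with hzβ | hzβ <;>
      first
      | (exfalso; linarith)
      | (left; constructor <;> linarith)
      | (right; constructor <;> linarith)
  by_cases hu : lu ≤ lz ∧ rz ≤ ru
  · left
    rcases key with ⟨h, -⟩ | ⟨-, h⟩
    · exact Icc_ssubset_Icc_left (by linarith) h hu.2
    · exact Icc_ssubset_Icc_right (by linarith) hu.1 h
  by_cases hv : lv ≤ lz ∧ rz ≤ rv
  · right; left
    rcases key with ⟨-, h⟩ | ⟨h, -⟩
    · exact Icc_ssubset_Icc_right (by linarith) hv.1 h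
    · exact Icc_ssubset_Icc_left (by linarith) h hv.2
  right; right
  rw [Icc_inter_Icc]
  apply Icc_subset_Icc <;> simp only [le_sup_iff, inf_le_iff] <;> grind

namespace IntervalRep

variable {V W : Type*} {G : SimpleGraph V} {H : SimpleGraph W} (R : IntervalRep G)

def chainLengths : Set ℕ := {k | ∃ f : Fin k → V, StrictMono (R.itv ∘ f)}

lemma nesting_eq_sSup : R.nesting = sSup R.chainLengths := rfl

lemma zero_mem_chainLengths : 0 ∈ R.chainLengths := ⟨Fin.elim0, fun i => i.elim0⟩

lemma itv_nonempty (v : V) : (R.itv v).Nonempty := nonempty_Icc.2 (R.le v)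

lemma itv_subset_itv_iff {u v : V} : R.itv u ⊆ R.itv v ↔ R.l v ≤ R.l u ∧ R.r u ≤ R.r v :=
  Icc_subset_Icc_iff (R.le u)

lemma itv_inter_nonempty_of_adj {u v : V} (h : G.Adj u v) : (R.itv u ∩ R.itv v).Nonempty :=
  (R.adj_iff u v h.ne).1 h

lemma disjoint_itv_of_not_adj {u v : V} (hne : u ≠ v) (h : ¬ G.Adj u v) :
    Disjoint (R.itv u) (R.itv v) :=
  disjoint_iff_inter_eq_empty.2 <| not_nonempty_iff_eq_empty.1 <| mt (R.adj_iff u v hne).2 h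

lemma bddAbove_chainLengths [Finite V] : BddAbove R.chainLengths :=
  ⟨Nat.card V, fun _ ⟨f, hf⟩ => by simpa using Nat.card_le_card_of_injective f hf.injective.of_comp⟩

lemma le_nesting_of_strictMono [Finite V] {k : ℕ} {f : Fin k → V}
    (hf : StrictMono (R.itv ∘ f)) : k ≤ R.nesting :=
  le_csSup R.bddAbove_chainLengths ⟨f, hf⟩

lemma nesting_le_of_forall {n : ℕ}
    (h : ∀ k (f : Fin k → V), StrictMono (R.itv ∘ f) → k ≤ n) : R.nesting ≤ n :=
  csSup_le ⟨0, R.zero_mem_chainLengths⟩ fun k ⟨f, hf⟩ => h k f hf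

lemma exists_strictMono_nesting [Finite V] : ∃ f : Fin R.nesting → V, StrictMono (R.itv ∘ f) :=
  Nat.sSup_mem ⟨0, R.zero_mem_chainLengths⟩ R.bddAbove_chainLengths

def comap (e : H ↪g G) : IntervalRep H where
  l := R.l ∘ e
  r := R.r ∘ e
  le x := R.le (e x)
  adj_iff _ _ hxy := e.map_adj_iff.symm.trans (R.adj_iff _ _ (e.injective.ne hxy))

lemma le_nesting_of_forall_mem_range [Finite W] (S : IntervalRep H) (φ : W → V)
    (hφ : ∀ x, S.itv x = R.itv (φ x)) {k : ℕ} {f : Fin k → V} (hf : StrictMono (R.itv ∘ f))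
    (hrange : ∀ t, f t ∈ range φ) : k ≤ S.nesting := by
  choose g hg using hrange
  have hcomp : S.itv ∘ g = R.itv ∘ f := funext fun t => by simp [hφ, hg]
  exact S.le_nesting_of_strictMono (hcomp ▸ hf)

lemma nesting_le_succ_of_ssubset_imp_mem_range [Finite W] (S : IntervalRep H) (φ : W → V)
    (hφ : ∀ x, S.itv x = R.itv (φ x)) (h : ∀ a b, R.itv a ⊂ R.itv b → a ∈ range φ) :
    R.nesting ≤ S.nesting + 1 := by
  refine R.nesting_le_of_forall fun k f hf => ?_
  cases k with
  | zero => omega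
  | succ m =>
    have := R.le_nesting_of_forall_mem_range S φ hφ (f := f ∘ Fin.castSucc)
      (hf.comp Fin.strictMono_castSucc) fun t => h _ _ (hf (Fin.castSucc_lt_last t))
    omega

lemma nesting_lt_of_forall_ssubset [Finite V] [Finite W] [Nonempty V] (S : IntervalRep H)
    (φ : W → V) (hφ : ∀ x, S.itv x = R.itv (φ x)) (h : ∀ x, ∃ v, S.itv x ⊂ R.itv v) :
    S.nesting < R.nesting := by
  suffices ∀ k (f : Fin k → W), StrictMono (S.itv ∘ f) → k + 1 ≤ R.nesting by
    obtain ⟨f, hf⟩ := S.exists_strictMono_nesting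
    exact this _ f hf
  intro k f hf
  obtain ⟨v, hv⟩ : ∃ v, ∀ i, S.itv (f i) ⊂ R.itv v := by
    cases k with
    | zero => exact ⟨Classical.arbitrary V, fun i => i.elim0⟩
    | succ m =>
      obtain ⟨v, hv⟩ := h (f (Fin.last m))
      exact ⟨v, fun i => (hf.monotone (Fin.le_last i)).trans_ssubset hv⟩
  have hsnoc : StrictMono (R.itv ∘ Fin.snoc (φ ∘ f) v) := by
    rw [Fin.comp_snoc]
    refine Fin.strictMono_snoc ?_ fun i => ?_
    · simpa [Function.comp_def, hφ] using hf
    · simpa [hφ] using hv i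
  exact R.le_nesting_of_strictMono hsnoc

def mapMono (e : ℝ → ℝ) (he : StrictMono e) : IntervalRep G where
  l v := e (R.l v)
  r v := e (R.r v)
  le v := he.monotone (R.le v)
  adj_iff u v huv := by
    rw [R.adj_iff u v huv, Icc_inter_Icc_nonempty_iff (R.le u) (R.le v),
      Icc_inter_Icc_nonempty_iff (he.monotone (R.le u)) (he.monotone (R.le v))]
    simp [he.le_iff_le]

variable {e : ℝ → ℝ} (he : StrictMono e)

lemma mapMono_itv_subset_iff {u v : V} :
    (R.mapMono e he).itv u ⊆ (R.mapMono e he).itv v ↔ R.itv u ⊆ R.itv v := by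
  rw [itv_subset_itv_iff, itv_subset_itv_iff]
  simp [mapMono, he.le_iff_le]

lemma nesting_mapMono : (R.mapMono e he).nesting = R.nesting := by
  simp only [nesting_eq_sSup, chainLengths, StrictMono, Function.comp_apply,
    ssubset_iff_subset_not_subset, mapMono_itv_subset_iff]

lemma mapMono_itv_subset_Ioo {a b : ℝ} (hab : ∀ t, e t ∈ Ioo a b) (v : V) :
    (R.mapMono e he).itv v ⊆ Ioo a b :=
  Icc_subset_Ioo (hab _).1 (hab _).2

end IntervalRep

section Adjacency

variable {W : Type*} (H : SimpleGraph W)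

lemma Ggamma_adj_inl_inl {a b : W} : (Ggamma H).Adj (.inl a) (.inl b) ↔ H.Adj a b := by
  simp only [Ggamma, SimpleGraph.fromRel_adj, ne_eq, Sum.inl.injEq, H.adj_comm b a, or_self,
    and_iff_right_iff_imp]
  exact H.ne_of_adj

lemma Ggamma_adj_inl_inr {a : W} {j : Fin 6} :
    (Ggamma H).Adj (.inl a) (.inr j) ↔ j = 0 ∨ j = 1 := by
  simp [Ggamma]

def Ggamma.inlEmbedding : H ↪g Ggamma H where
  toFun := Sum.inl
  inj' := Sum.inl_injective
  map_rel_iff' := Ggamma_adj_inl_inl H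

end Adjacency

section SigmaGraph

variable {p : ℕ} {V : Fin p → Type*} (G : ∀ i, SimpleGraph (V i))

lemma sigmaGraph_adj_mk_mk {i : Fin p} {x y : V i} :
    (sigmaGraph G).Adj ⟨i, x⟩ ⟨i, y⟩ ↔ (G i).Adj x y := by
  simp only [sigmaGraph, SimpleGraph.fromRel_adj, ne_eq, Sigma.mk.inj_iff, heq_eq_eq, true_and,
    exists_const, (G i).adj_comm y x, or_self, and_iff_right_iff_imp]
  exact (G i).ne_of_adj

lemma sigmaGraph_not_adj_of_ne {i j : Fin p} (hij : i ≠ j) (x : V i) (y : V j) :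
    ¬ (sigmaGraph G).Adj ⟨i, x⟩ ⟨j, y⟩ := by
  simp [sigmaGraph, hij, hij.symm]

def sigmaGraph.mkEmbedding (i : Fin p) : G i ↪g sigmaGraph G where
  toFun := Sigma.mk i
  inj' := sigma_mk_injective
  map_rel_iff' := sigmaGraph_adj_mk_mk G

end SigmaGraph

namespace IntervalRep

section Sigma

variable {p : ℕ} {V : Fin p → Type*} {G : ∀ i, SimpleGraph (V i)} (R : ∀ i, IntervalRep (G i))
  (hR : ∀ i j, i ≠ j → ∀ x y, Disjoint ((R i).itv x) ((R j).itv y))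

def sigma : IntervalRep (sigmaGraph G) where
  l z := (R z.1).l z.2
  r z := (R z.1).r z.2
  le z := (R z.1).le z.2
  adj_iff := by
    rintro ⟨i, x⟩ ⟨j, y⟩ hne
    by_cases hij : i = j
    · subst hij
      rw [sigmaGraph_adj_mk_mk]
      exact (R i).adj_iff x y fun h => hne (h ▸ rfl)
    · simp only [sigmaGraph_not_adj_of_ne G hij, false_iff, not_nonempty_iff_eq_empty]
      exact disjoint_iff_inter_eq_empty.1 (hR i j hij x y)

lemma sigma_nesting_le [∀ i, Finite (V i)] :
    (sigma R hR).nesting ≤ Finset.univ.sup fun i => (R i).nesting := by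
  refine nesting_le_of_forall _ fun k f hf => ?_
  cases k with
  | zero => exact Nat.zero_le _
  | succ m =>
    have hc : ∀ t, f t ∈ range (Sigma.mk (f 0).1) := by
      intro t
      rw [range_sigmaMk]
      by_contra hne
      have hsub : (sigma R hR).itv (f 0) ⊆ (sigma R hR).itv (f t) := hf.monotone (Fin.zero_le t)
      exact ((sigma R hR).itv_nonempty (f 0)).ne_empty
        (disjoint_self.1 ((hR _ _ (Ne.symm hne) _ _).mono_right hsub))
    exact ((sigma R hR).le_nesting_of_forall_mem_range (R (f 0).1) _ (fun _ => rfl) hf hc).trans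
      (Finset.le_sup (f := fun i => (R i).nesting) (Finset.mem_univ _))

end Sigma

variable {W : Type*} {H : SimpleGraph W}

def gammaExtend (S : IntervalRep H) (L : ℝ) (hL : 0 ≤ L) (hS : ∀ x, S.itv x ⊆ Icc 0 L) :
    IntervalRep (Ggamma H) where
  l := Sum.elim S.l ![-1, 0, -2, -3, L + 1, L + 2]
  r := Sum.elim S.r ![L, L + 1, -1, -2, L + 2, L + 3]
  le
    | .inl x => S.le x
    | .inr j => by fin_cases j <;> simp <;> linarith
  adj_iff := by
    have hS' x : 0 ≤ S.l x ∧ S.r x ≤ L := (Icc_subset_Icc_iff (S.le x)).1 (hS x)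
    have key x j : (Ggamma H).Adj (.inl x) (.inr j) ↔
        (Icc (S.l x) (S.r x) ∩ Icc (![-1, 0, -2, -3, L + 1, L + 2] j)
          (![L, L + 1, -1, -2, L + 2, L + 3] j)).Nonempty := by
      have := S.le x
      have := hS' x
      rw [Ggamma_adj_inl_inr]
      simp only [Icc_inter_Icc, nonempty_Icc, sup_le_iff, le_inf_iff]
      fin_cases j <;> simp <;> (try and_intros) <;> (try intros) <;> linarith
    rintro (x | i) (y | j) hne
    · exact (Ggamma_adj_inl_inl H).trans (S.adj_iff x y fun h => hne (congrArg _ h))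
    · exact key x j
    · rw [SimpleGraph.adj_comm, inter_comm]
      exact key y i
    · simp only [Sum.elim_inr, Icc_inter_Icc, nonempty_Icc, sup_le_iff, le_inf_iff]
      fin_cases i <;> fin_cases j <;> simp [Ggamma] at hne ⊢ <;> (try and_intros) <;>
        (try intros) <;> linarith

lemma gammaExtend_nesting_le [Finite W] (S : IntervalRep H) (L : ℝ) (hL : 0 ≤ L)
    (hS : ∀ x, S.itv x ⊆ Icc 0 L) : (S.gammaExtend L hL hS).nesting ≤ S.nesting + 1 := by
  refine nesting_le_succ_of_ssubset_imp_mem_range _ S Sum.inl (fun _ => rfl) fun a b hab => ?_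
  obtain x | i := a
  · exact ⟨x, rfl⟩
  rw [ssubset_iff_subset_not_subset, itv_subset_itv_iff, itv_subset_itv_iff] at hab
  obtain y | j := b
  · have hy := (Icc_subset_Icc_iff (S.le y)).1 (hS y)
    have := S.le y
    fin_cases i <;> simp [gammaExtend] at hab <;> linarith
  · fin_cases i <;> fin_cases j <;> simp [gammaExtend] at hab <;> linarith

lemma itv_inl_ssubset_of_not_adj (R : IntervalRep (Ggamma H)) {z w : W} (hzw : z ≠ w)
    (hadj : ¬ H.Adj z w) :
    R.itv (.inl z) ⊂ R.itv (.inr 0) ∨ R.itv (.inl z) ⊂ R.itv (.inr 1) := by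
  have meet : ∀ {x y}, (Ggamma H).Adj x y → (R.itv x ∩ R.itv y).Nonempty :=
    R.itv_inter_nonempty_of_adj
  have avoid : ∀ {x y}, x ≠ y → ¬ (Ggamma H).Adj x y → ∀ ⦃t⦄, t ∈ R.itv x → t ∉ R.itv y :=
    fun hne h => disjoint_left.1 (R.disjoint_itv_of_not_adj hne h)
  obtain ⟨α, hα₂, hα₀⟩ : (R.itv (.inr 2) ∩ R.itv (.inr 0)).Nonempty := meet (by simp [Ggamma])
  obtain ⟨β, hβ₄, hβ₁⟩ : (R.itv (.inr 4) ∩ R.itv (.inr 1)).Nonempty := meet (by simp [Ggamma])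
  have hα₁ : α ∉ R.itv (.inr 1) := avoid (x := .inr 2) (by simp) (by simp [Ggamma]) hα₂
  have hβ₀ : β ∉ R.itv (.inr 0) := avoid (x := .inr 4) (by simp) (by simp [Ggamma]) hβ₄
  have hzα : α ∉ R.itv (.inl z) := avoid (x := .inr 2) (by simp) (by simp [Ggamma]) hα₂
  have hzβ : β ∉ R.itv (.inl z) := avoid (x := .inr 4) (by simp) (by simp [Ggamma]) hβ₄
  have hz₀ : (R.itv (.inl z) ∩ R.itv (.inr 0)).Nonempty := meet (by simp [Ggamma])
  have hz₁ : (R.itv (.inl z) ∩ R.itv (.inr 1)).Nonempty := meet (by simp [Ggamma])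
  rcases Icc_ssubset_or_ssubset_or_inter_subset ⟨hα₀, hα₁⟩ ⟨hβ₁, hβ₀⟩ hzα hzβ hz₀ hz₁
    with h | h | h
  · exact .inl h
  · exact .inr h
  -- `I(z)` covers `I(u) ∩ I(v)`, which meets `I(w)` by Helly's property of intervals
  have hw : (R.itv (.inl w) ∩ (R.itv (.inr 0) ∩ R.itv (.inr 1))).Nonempty :=
    Icc_inter_Icc_inter_Icc_nonempty (meet (by simp [Ggamma])) (meet (by simp [Ggamma]))
      (meet (by simp [Ggamma]))
  have hzw' : (R.itv (.inl z) ∩ R.itv (.inl w)).Nonempty :=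
    inter_comm (R.itv (.inl w)) _ ▸ hw.mono (inter_subset_inter_right _ h)
  exact absurd ((R.adj_iff _ _ (by simpa using hzw)).2 hzw') (by simpa [Ggamma_adj_inl_inl])

end IntervalRep

section NestingNumber

variable {V : Type*} {G : SimpleGraph V}

lemma nu_le_nesting (R : IntervalRep G) : nu G ≤ R.nesting := Nat.sInf_le ⟨R, rfl⟩

lemma exists_nesting_eq_nu (h : IsIntervalGraph G) : ∃ R : IntervalRep G, R.nesting = nu G :=
  Nat.sInf_mem (s := {n | ∃ R : IntervalRep G, R.nesting = n}) (h.elim fun R => ⟨_, R, rfl⟩)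

lemma le_nu_of_forall {n : ℕ} (h : IsIntervalGraph G) (hn : ∀ R : IntervalRep G, n ≤ R.nesting) :
    n ≤ nu G :=
  let ⟨R, hR⟩ := exists_nesting_eq_nu h
  hR ▸ hn R

end NestingNumber

section DisjointUnion

variable {p : ℕ} {V : Fin p → Type*} (G : ∀ i, SimpleGraph (V i))

lemma exists_sigmaGraph_rep [∀ i, Finite (V i)] (hG : ∀ i, IsIntervalGraph (G i)) :
    ∃ S : IntervalRep (sigmaGraph G),
      (∀ z, S.itv z ⊆ Icc 0 p) ∧ S.nesting ≤ Finset.univ.sup fun i => nu (G i) := by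
  choose Q hQ using fun i => exists_nesting_eq_nu (hG i)
  let R i := (Q i).mapMono _ (Real.sigmoid_strictMono.const_add ((i : ℕ) : ℝ))
  have hR i x : (R i).itv x ⊆ Ioo ((i : ℕ) : ℝ) ((i : ℕ) + 1) :=
    (Q i).mapMono_itv_subset_Ioo _
      (fun t => ⟨by linarith [Real.sigmoid_pos t], by linarith [Real.sigmoid_lt_one t]⟩) x
  have hdisj : ∀ i j, i ≠ j → ∀ x y, Disjoint ((R i).itv x) ((R j).itv y) := by
    refine fun i j hij x y => disjoint_left.2 fun t hi hj => hij (Fin.ext ?_)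
    obtain ⟨hi₁, hi₂⟩ := hR i x hi
    obtain ⟨hj₁, hj₂⟩ := hR j y hj
    have : (i : ℕ) < j + 1 := by exact_mod_cast hi₁.trans hj₂
    have : (j : ℕ) < i + 1 := by exact_mod_cast hj₁.trans hi₂
    omega
  refine ⟨.sigma R hdisj, fun z => (hR z.1 z.2).trans ?_, ?_⟩
  · exact Ioo_subset_Icc_self.trans (Icc_subset_Icc (by positivity) (by exact_mod_cast z.1.isLt))
  · refine (IntervalRep.sigma_nesting_le R hdisj).trans (le_of_eq (Finset.sup_congr rfl ?_))
    intro i _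
    rw [IntervalRep.nesting_mapMono, hQ]

lemma sup_nu_lt_nesting (hp : 2 ≤ p) [∀ i, Finite (V i)] [∀ i, Nonempty (V i)]
    (R : IntervalRep (Ggamma (sigmaGraph G))) :
    (Finset.univ.sup fun i => nu (G i)) < R.nesting := by
  have : Nontrivial (Fin p) := Fin.nontrivial_iff_two_le.2 hp
  obtain ⟨i, -, hi⟩ := Finset.univ.exists_mem_eq_sup Finset.univ_nonempty fun i => nu (G i)
  rw [hi]
  let e := (sigmaGraph.mkEmbedding G i).trans (Ggamma.inlEmbedding _)
  refine (nu_le_nesting (R.comap e)).trans_lt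
    (R.nesting_lt_of_forall_ssubset _ e (fun _ => rfl) fun x => ?_)
  obtain ⟨j, hj⟩ := exists_ne i
  rcases R.itv_inl_ssubset_of_not_adj (w := ⟨j, Classical.arbitrary _⟩) (by simp [hj.symm])
    (sigmaGraph_not_adj_of_ne G hj.symm x _) with h | h
  exacts [⟨_, h⟩, ⟨_, h⟩]

end DisjointUnion

theorem stmt_15_general {p : ℕ} (hp : 2 ≤ p) {V : Fin p → Type*} [∀ i, Fintype (V i)]
    [∀ i, Nonempty (V i)] (G : ∀ i, SimpleGraph (V i))
    (hG : ∀ i, IsIntervalGraph (G i)) :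
    nu (Ggamma (sigmaGraph G)) = (Finset.univ.sup fun i => nu (G i)) + 1 := by
  obtain ⟨S, hS, hSnu⟩ := exists_sigmaGraph_rep G hG
  let R := S.gammaExtend p p.cast_nonneg hS
  refine le_antisymm ?_ (le_nu_of_forall ⟨R⟩ fun R' => sup_nu_lt_nesting G hp R')
  calc nu _ ≤ R.nesting := nu_le_nesting R
    _ ≤ S.nesting + 1 := S.gammaExtend_nesting_le _ _ hS
    _ ≤ _ := Nat.add_le_add_right hSnu 1

/-- for nonempty connected interval graphs `G₁, …, G_p` (`p ≥ 2`) and `G`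
their disjoint union, `ν(G_γ) = max{ν(G₁), …, ν(G_p)} + 1`. -/
theorem stmt_15 {p : ℕ} (hp : 2 ≤ p) {V : Fin p → Type*} [∀ i, Fintype (V i)]
    [∀ i, Nonempty (V i)] (G : ∀ i, SimpleGraph (V i))
    (hconn : ∀ i, (G i).Connected) (hG : ∀ i, IsIntervalGraph (G i)) :
    nu (Ggamma (sigmaGraph G)) = (Finset.univ.sup fun i => nu (G i)) + 1 :=
  stmt_15_general hp G hG
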